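/- If w* satisfies wᵢ* = clip(zᵢ - τ*, ℓ, u) for all i and Σᵢ wᵢ* = 1, then w* is the Euclidean projection of z onto the set {w ∈ ℝ^N : Σᵢ wᵢ = 1, ℓ ≤ wᵢ ≤ u}. -/

import Mathlib

/-!
Clipping is the projection onto `[l, u]`, so each coordinate satisfies the one-dimensional
variational inequality `(a - wᵢ*) (wᵢ* - (zᵢ - τ*)) ≥ 0`. Summing over `i`, the shift `τ*` drops
out because every competitor has the same coordinate sum as `w*`, which gives the variational
inequality `⟪w - w*, w* - z⟫ ≥ 0` characterising the projection.
-/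

open Finset

lemma sub_mul_clip_sub_nonneg {l u a b : ℝ} (hla : l ≤ a) (hau : a ≤ u) :
    0 ≤ (a - max l (min b u)) * (max l (min b u) - b) := by
  rcases le_total b l with hbl | hlb
  · rw [max_eq_left ((min_le_left b u).trans hbl)]
    nlinarith
  rcases le_total u b with hub | hbu
  · rw [min_eq_right hub, max_eq_right (hla.trans hau)]
    nlinarith
  · rw [min_eq_left hbu, max_eq_right hlb]
    simp

lemma sum_sq_sub_le_of_sum_mul_nonneg {ι : Type*} [Fintype ι] {z p w : ι → ℝ}
    (h : 0 ≤ ∑ i, (w i - p i) * (p i - z i)) :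
    ∑ i, (p i - z i) ^ 2 ≤ ∑ i, (w i - z i) ^ 2 := by
  have hexpand : ∑ i, (w i - z i) ^ 2 =
      ∑ i, (p i - z i) ^ 2 + ∑ i, (w i - p i) ^ 2 + 2 * ∑ i, (w i - p i) * (p i - z i) := by
    simp only [mul_sum, ← sum_add_distrib]
    exact sum_congr rfl fun i _ => by ring
  have hsq : 0 ≤ ∑ i, (w i - p i) ^ 2 := sum_nonneg fun i _ => sq_nonneg _
  linarith

lemma sum_sub_mul_clip_sub_nonneg {ι : Type*} [Fintype ι] {z p w : ι → ℝ} {l u τ : ℝ}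
    (hp : ∀ i, p i = max l (min (z i - τ) u)) (hw : ∀ i, l ≤ w i ∧ w i ≤ u)
    (hsum : ∑ i, w i = ∑ i, p i) :
    0 ≤ ∑ i, (w i - p i) * (p i - z i) := by
  calc 0 ≤ ∑ i, (w i - p i) * (p i - (z i - τ)) :=
        sum_nonneg fun i _ => hp i ▸ sub_mul_clip_sub_nonneg (hw i).1 (hw i).2
    _ = ∑ i, (w i - p i) * (p i - (z i - τ)) - τ * ∑ i, (w i - p i) := by
        rw [sum_sub_distrib, hsum, sub_self, mul_zero, sub_zero]
    _ = ∑ i, (w i - p i) * (p i - z i) := by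
        rw [mul_sum, ← sum_sub_distrib]
        exact sum_congr rfl fun i _ => by ring

/-- If `w*ᵢ = clip(zᵢ - τ*, ℓ, u)` and `Σᵢ w*ᵢ = 1`, then `w*` is the Euclidean
projection of `z` onto the box-constrained simplex. -/
theorem casp_clip_is_euclidean_projection (N : ℕ) (z : Fin N → ℝ) (l u : ℝ) (hlu : l ≤ u)
    (τstar : ℝ) (wstar : Fin N → ℝ)
    (hw : ∀ i, wstar i = max l (min (z i - τstar) u))
    (hsum : (∑ i, wstar i) = 1) :
    wstar ∈ {w : Fin N → ℝ | (∑ i, w i) = 1 ∧ ∀ i, l ≤ w i ∧ w i ≤ u} ∧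
    ∀ w ∈ {w : Fin N → ℝ | (∑ i, w i) = 1 ∧ ∀ i, l ≤ w i ∧ w i ≤ u},
      (∑ i, (wstar i - z i) ^ 2) ≤ ∑ i, (w i - z i) ^ 2 := by
  refine ⟨⟨hsum, fun i => hw i ▸ ⟨le_max_left _ _, max_le hlu (min_le_right _ _)⟩⟩, ?_⟩
  rintro w ⟨hw_sum, hw_box⟩
  exact sum_sq_sub_le_of_sum_mul_nonneg
    (sum_sub_mul_clip_sub_nonneg hw hw_box (hw_sum.trans hsum.symm))
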